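/- Let μ > 0, μ_c > 0 and λ ∈ ℝ with 2μ + 3λ > 0 (positive bulk modulus), let n ∈ ℝ³ with ‖n‖ = 1, and let E ∈ ℝ^{3×3} satisfy E n = 0. Then the infimum over v ∈ ℝ³ of W_mp(E + v ⊗ n) := μ‖sym(E + v ⊗ n)‖² + μ_c‖skew(E + v ⊗ n)‖² + (λ/2)(tr(E + v ⊗ n))² is attained, and its value (the homogenized membrane energy of the Cosserat-shell model) equals μ‖sym E^∥‖² + μ_c‖skew E^∥‖² + (λμ/(λ+2μ)) (tr E)² + (2μμ_c/(μ+μ_c)) ‖Eᵀn‖², where E^∥ := (𝟙₃ − n ⊗ n) E. -/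

import Mathlib

/-!
With `E n = 0` and `n ⬝ᵥ n = 1`, the identity
`μ ‖sym X‖² + μc ‖skew X‖² = (μ + μc)/2 ‖X‖² + (μ - μc)/2 tr (X X)` turns `Wmp (E + v ⊗ n)` into a
quadratic polynomial in `v` and `t = v ⬝ᵥ n`, while `E^∥ = E - n ⊗ Eᵀn` has
`‖E^∥‖² = ‖E‖² - ‖Eᵀn‖²` and `tr (E^∥ E^∥) = tr (E E)`. Completing squares gives
`Wmp (E + v ⊗ n) = WmpHom n E + (μ + μc)/2 ‖v - t n + c Eᵀn‖² + (λ + 2μ)/2 (t + λ tr E / (λ + 2μ))²`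
with `c = (μ - μc)/(μ + μc)`; both squares vanish at `v = -(λ tr E / (λ + 2μ)) n - c Eᵀn`.
-/

open Matrix

noncomputable section

/-- Symmetric part of a matrix. -/
def msym {n : ℕ} (X : Matrix (Fin n) (Fin n) ℝ) : Matrix (Fin n) (Fin n) ℝ :=
  (1 / 2 : ℝ) • (X + Xᵀ)

/-- Skew-symmetric part of a matrix. -/
def mskew {n : ℕ} (X : Matrix (Fin n) (Fin n) ℝ) : Matrix (Fin n) (Fin n) ℝ :=
  (1 / 2 : ℝ) • (X - Xᵀ)

/-- Squared Frobenius norm `‖X‖² = tr(XᵀX)`. -/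
def mnormSq {n : ℕ} (X : Matrix (Fin n) (Fin n) ℝ) : ℝ :=
  Matrix.trace (Xᵀ * X)

/-- Squared Euclidean norm on `ℝ³`. -/
def vnormSq (v : Fin 3 → ℝ) : ℝ := ∑ i, (v i) ^ 2

/-- The quadratic isotropic membrane energy. -/
def Wmp (μ μc lam : ℝ) (X : Matrix (Fin 3) (Fin 3) ℝ) : ℝ :=
  μ * mnormSq (msym X) + μc * mnormSq (mskew X)
    + (lam / 2) * (Matrix.trace X) ^ 2

section

variable {m : ℕ}

theorem trace_mul_vecMulVec (A : Matrix (Fin m) (Fin m) ℝ) (u w : Fin m → ℝ) :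
    trace (A * vecMulVec u w) = w ⬝ᵥ A *ᵥ u := by
  rw [mul_vecMulVec, trace_vecMulVec, dotProduct_comm]

theorem trace_vecMulVec_mul (A : Matrix (Fin m) (Fin m) ℝ) (u w : Fin m → ℝ) :
    trace (vecMulVec u w * A) = w ⬝ᵥ A *ᵥ u := by
  rw [trace_mul_comm, trace_mul_vecMulVec]

theorem mnormSq_add_vecMulVec (A : Matrix (Fin m) (Fin m) ℝ) (u w : Fin m → ℝ) :
    mnormSq (A + vecMulVec u w) = mnormSq A + 2 * (u ⬝ᵥ A *ᵥ w) + (u ⬝ᵥ u) * (w ⬝ᵥ w) := by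
  have h : trace (Aᵀ * vecMulVec u w) = u ⬝ᵥ A *ᵥ w := by
    rw [trace_mul_vecMulVec, mulVec_transpose, dotProduct_mulVec, dotProduct_comm]
  simp only [mnormSq, transpose_add, transpose_vecMulVec, add_mul, mul_add, trace_add, h,
    trace_vecMulVec_mul, vecMulVec_mul_vecMulVec, trace_vecMulVec, dotProduct_smul, smul_eq_mul]
  ring

theorem trace_mul_self_add_vecMulVec (A : Matrix (Fin m) (Fin m) ℝ) (u w : Fin m → ℝ) :
    trace ((A + vecMulVec u w) * (A + vecMulVec u w))
      = trace (A * A) + 2 * (w ⬝ᵥ A *ᵥ u) + (u ⬝ᵥ w) ^ 2 := by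
  simp only [add_mul, mul_add, trace_add, trace_mul_vecMulVec, trace_vecMulVec_mul,
    vecMulVec_mul_vecMulVec, trace_vecMulVec, dotProduct_smul, smul_eq_mul, dotProduct_comm w u]
  ring

theorem mnormSq_msym (X : Matrix (Fin m) (Fin m) ℝ) :
    mnormSq (msym X) = (mnormSq X + trace (X * X)) / 2 := by
  have h : trace (X * Xᵀ) = trace (Xᵀ * X) := trace_mul_comm _ _
  simp only [mnormSq, msym, transpose_smul, transpose_add, transpose_transpose, smul_mul_smul,
    add_mul, mul_add, trace_smul, trace_add, trace_transpose_mul, h, smul_eq_mul]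
  ring

theorem mnormSq_mskew (X : Matrix (Fin m) (Fin m) ℝ) :
    mnormSq (mskew X) = (mnormSq X - trace (X * X)) / 2 := by
  have h : trace (X * Xᵀ) = trace (Xᵀ * X) := trace_mul_comm _ _
  simp only [mnormSq, mskew, transpose_smul, transpose_sub, transpose_transpose, smul_mul_smul,
    sub_mul, mul_sub, trace_smul, trace_sub, trace_transpose_mul, h, smul_eq_mul]
  ring

theorem one_sub_vecMulVec_self_mul (n : Fin m → ℝ) (E : Matrix (Fin m) (Fin m) ℝ) :
    (1 - vecMulVec n n) * E = E + vecMulVec (-n) (Eᵀ *ᵥ n) := by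
  rw [sub_mul, Matrix.one_mul, vecMulVec_mul, mulVec_transpose, neg_vecMulVec, sub_eq_add_neg]

section UnitNormal

variable {n : Fin m → ℝ} {E : Matrix (Fin m) (Fin m) ℝ}

theorem mulVec_transpose_dotProduct_of_mulVec_eq_zero (hE : E *ᵥ n = 0) :
    (Eᵀ *ᵥ n) ⬝ᵥ n = 0 := by
  rw [mulVec_transpose, ← dotProduct_mulVec, hE, dotProduct_zero]

theorem mnormSq_one_sub_vecMulVec_self_mul (hn : n ⬝ᵥ n = 1) :
    mnormSq ((1 - vecMulVec n n) * E) = mnormSq E - (Eᵀ *ᵥ n) ⬝ᵥ (Eᵀ *ᵥ n) := by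
  rw [one_sub_vecMulVec_self_mul, mnormSq_add_vecMulVec, neg_dotProduct, neg_dotProduct,
    dotProduct_neg, dotProduct_mulVec, ← mulVec_transpose, hn]
  ring

theorem trace_mul_self_one_sub_vecMulVec_self_mul (hE : E *ᵥ n = 0) :
    trace (((1 - vecMulVec n n) * E) * ((1 - vecMulVec n n) * E)) = trace (E * E) := by
  rw [one_sub_vecMulVec_self_mul, trace_mul_self_add_vecMulVec, mulVec_neg, hE, neg_zero,
    dotProduct_zero, neg_dotProduct, dotProduct_comm,
    mulVec_transpose_dotProduct_of_mulVec_eq_zero hE]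
  ring

end UnitNormal

end

theorem Wmp_eq (μ μc lam : ℝ) (X : Matrix (Fin 3) (Fin 3) ℝ) :
    Wmp μ μc lam X = (μ + μc) / 2 * mnormSq X + (μ - μc) / 2 * trace (X * X)
      + lam / 2 * trace X ^ 2 := by
  rw [Wmp, mnormSq_msym, mnormSq_mskew]
  ring

theorem vnormSq_nonneg (v : Fin 3 → ℝ) : 0 ≤ vnormSq v :=
  Finset.sum_nonneg fun _ _ => sq_nonneg _

theorem vnormSq_eq_dotProduct (v : Fin 3 → ℝ) : vnormSq v = v ⬝ᵥ v := by
  simp only [vnormSq, dotProduct, sq]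

def WmpHom (μ μc lam : ℝ) (n : Fin 3 → ℝ) (E : Matrix (Fin 3) (Fin 3) ℝ) : ℝ :=
  μ * mnormSq (msym ((1 - vecMulVec n n) * E)) + μc * mnormSq (mskew ((1 - vecMulVec n n) * E))
    + (lam * μ / (lam + 2 * μ)) * trace E ^ 2
    + (2 * μ * μc / (μ + μc)) * vnormSq (Eᵀ *ᵥ n)

theorem Wmp_add_vecMulVec {μ μc lam : ℝ} (hα : μ + μc ≠ 0) (hβ : lam + 2 * μ ≠ 0)
    {n : Fin 3 → ℝ} (hn : n ⬝ᵥ n = 1) {E : Matrix (Fin 3) (Fin 3) ℝ} (hE : E *ᵥ n = 0)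
    (v : Fin 3 → ℝ) :
    Wmp μ μc lam (E + vecMulVec v n) = WmpHom μ μc lam n E
      + (μ + μc) / 2 * vnormSq (v - (v ⬝ᵥ n) • n + ((μ - μc) / (μ + μc)) • (Eᵀ *ᵥ n))
      + (lam + 2 * μ) / 2 * (v ⬝ᵥ n + lam * trace E / (lam + 2 * μ)) ^ 2 := by
  have ha : (Eᵀ *ᵥ n) ⬝ᵥ n = 0 := mulVec_transpose_dotProduct_of_mulVec_eq_zero hE
  have hEv : n ⬝ᵥ E *ᵥ v = (Eᵀ *ᵥ n) ⬝ᵥ v := by rw [dotProduct_mulVec, mulVec_transpose]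
  rw [WmpHom, Wmp_eq, mnormSq_msym, mnormSq_mskew, mnormSq_one_sub_vecMulVec_self_mul hn,
    trace_mul_self_one_sub_vecMulVec_self_mul hE, mnormSq_add_vecMulVec,
    trace_mul_self_add_vecMulVec, trace_add, trace_vecMulVec, hE, dotProduct_zero, hEv, hn,
    vnormSq_eq_dotProduct, vnormSq_eq_dotProduct]
  simp only [add_dotProduct, sub_dotProduct, dotProduct_add, dotProduct_sub, smul_dotProduct,
    dotProduct_smul, smul_eq_mul, hn, ha, dotProduct_comm n v, dotProduct_comm n (Eᵀ *ᵥ n),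
    dotProduct_comm v (Eᵀ *ᵥ n)]
  -- `field_simp` normalizes the denominator to `lam + μ * 2`
  have hβ' : lam + μ * 2 ≠ 0 := by rwa [mul_comm]
  field_simp
  ring

theorem isLeast_Wmp_add_vecMulVec {μ μc lam : ℝ} (hα : 0 < μ + μc) (hβ : 0 < lam + 2 * μ)
    {n : Fin 3 → ℝ} (hn : n ⬝ᵥ n = 1) {E : Matrix (Fin 3) (Fin 3) ℝ} (hE : E *ᵥ n = 0) :
    IsLeast (Set.range fun v => Wmp μ μc lam (E + vecMulVec v n)) (WmpHom μ μc lam n E) := by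
  have hW := Wmp_add_vecMulVec hα.ne' hβ.ne' hn hE
  set c := (μ - μc) / (μ + μc)
  set k := lam * trace E / (lam + 2 * μ)
  refine ⟨⟨-k • n - c • (Eᵀ *ᵥ n), ?_⟩, ?_⟩
  · have ht : (-k • n - c • (Eᵀ *ᵥ n)) ⬝ᵥ n = -k := by
      simp [sub_dotProduct, hn, mulVec_transpose_dotProduct_of_mulVec_eq_zero hE]
    have hw : -k • n - c • (Eᵀ *ᵥ n) - (-k) • n + c • (Eᵀ *ᵥ n) = 0 := by module
    dsimp only
    rw [hW, ht, hw]
    simp [vnormSq]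
  · rintro _ ⟨v, rfl⟩
    have h₁ := mul_nonneg (half_pos hα).le (vnormSq_nonneg (v - (v ⬝ᵥ n) • n + c • (Eᵀ *ᵥ n)))
    have h₂ := mul_nonneg (half_pos hβ).le (sq_nonneg (v ⬝ᵥ n + k))
    dsimp only
    rw [hW]
    linarith

theorem stmt_18 (μ μc lam : ℝ) (hμ : 0 < μ) (hμc : 0 < μc)
    (hbulk : 0 < 2 * μ + 3 * lam)
    (n : Fin 3 → ℝ) (hn : vnormSq n = 1)
    (E : Matrix (Fin 3) (Fin 3) ℝ) (hE : E.mulVec n = 0) :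
    IsLeast
      (Set.range fun v : Fin 3 → ℝ => Wmp μ μc lam (E + vecMulVec v n))
      (μ * mnormSq (msym (((1 : Matrix (Fin 3) (Fin 3) ℝ) - vecMulVec n n) * E))
        + μc * mnormSq (mskew (((1 : Matrix (Fin 3) (Fin 3) ℝ) - vecMulVec n n) * E))
        + (lam * μ / (lam + 2 * μ)) * (Matrix.trace E) ^ 2
        + (2 * μ * μc / (μ + μc)) * vnormSq (Eᵀ.mulVec n)) :=
  isLeast_Wmp_add_vecMulVec (by linarith) (by linarith) (by rwa [← vnormSq_eq_dotProduct]) hE
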